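/- (i) For each t ∈ [1,n], the right-going lines of ℓ(D) labelled ∗ issuing from b(t) are exactly the lines joining b(t) to b(s) for s ∈ s_S(t). (ii) For each s ∈ [1,n], there is at most one left-going line of ℓ(D) labelled ∗ ending at b(s); it exists precisely when s ∈ s_S(t) for some t ∈ [1,n], and in that case it joins b(t) to b(s). -/

import Mathlib

open scoped Classical

/-- height of column `j` of the diagram (columns numbered from 1). -/
def hgt (c : List ℕ) (j : ℕ) : ℕ := c.getD (j - 1) 0

/-- number of boxes in the columns strictly to the left of column `j`. -/
def off (c : List ℕ) (j : ℕ) : ℕ := (c.take (j - 1)).sum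

/-- `(i, j)` (row `i`, column `j`) is a box of the diagram `D`. -/
def IsBox (c : List ℕ) (i j : ℕ) : Prop :=
  1 ≤ j ∧ j ≤ c.length ∧ 1 ≤ i ∧ i ≤ hgt c j

/-- the entry of the box `(i, j)` in the tableau `T`. -/
def Tentry (c : List ℕ) (i j : ℕ) : ℕ := off c j + i

/-- the column of the box of `D` carrying entry `m` in `T`. -/
noncomputable def colOf (c : List ℕ) (m : ℕ) : ℕ := sInf {j | m ≤ (c.take j).sum}

/-- the row of the box of `D` carrying entry `m` in `T`. -/
noncomputable def rowOf (c : List ℕ) (m : ℕ) : ℕ := m - off c (colOf c m)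

/-- the total order `≼` on entries: increasing down columns, then from right to left. -/
def ple (c : List ℕ) (a b : ℕ) : Prop :=
  colOf c b < colOf c a ∨ (colOf c a = colOf c b ∧ a ≤ b)

/-- the strict version of `≼`. -/
def plt (c : List ℕ) (a b : ℕ) : Prop :=
  colOf c b < colOf c a ∨ (colOf c a = colOf c b ∧ a < b)

/-- column `j` has a left neighbour in `D`. -/
def HasLeftNb (c : List ℕ) (j : ℕ) : Prop :=
  ∃ i, 1 ≤ i ∧ i < j ∧ hgt c i = hgt c j ∧
    ∀ i', i < i' → i' < j → hgt c i' ≠ hgt c j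

/-- the `j`-th column of the tableau `T`, rows to optional entries. -/
def Tcol (c : List ℕ) (j : ℕ) : ℕ → Option ℕ := fun i =>
  if 1 ≤ i ∧ i ≤ hgt c j then some (Tentry c i j) else none

/-- one step of the propagation rule building `T(∞)`: the entry (if any) in row `t`
of column `j - 1` of `T(∞)` (given by `prev`) is propagated into the partially
built column `j` (given by `cur`). -/
noncomputable def propStep (c : List ℕ) (j : ℕ) (prev : ℕ → Option ℕ)
    (cur : ℕ → Option ℕ) (t : ℕ) : ℕ → Option ℕ :=
  match prev t with
  | none => cur
  | some l =>
    if hgt c j = t then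
      if HasLeftNb c j ∧ cur (t + 1) = none then
        Function.update cur (t + 1) (some l)
      else cur
    else
      if cur t = none then Function.update cur t (some l) else cur

/-- the `j`-th column of the composition tableau `T(∞)`. -/
noncomputable def TinfCol (c : List ℕ) : ℕ → ℕ → Option ℕ
  | 0 => fun _ => none
  | 1 => Tcol c 1
  | j + 2 =>
      (List.range (c.sum + 2)).foldl
        (propStep c (j + 2) (TinfCol c (j + 1))) (Tcol c (j + 2))

/-- labels of lines: `1` or `∗`. -/
inductive Lab : Type
  | one : Lab
  | star : Lab
deriving DecidableEq

/-- maximal height among the columns `1, …, j - 1`. -/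
def maxHgt (c : List ℕ) (j : ℕ) : ℕ := (c.take (j - 1)).foldr max 0

/-- the maximal column height of the diagram `D`. -/
def maxH (c : List ℕ) : ℕ := c.foldr max 0

/-- `LineB c a i j lab` : the line family `ℓ(D)` contains a line labelled `lab`
whose left end-point is the box of `D` carrying entry `a` in `T` and whose right
end-point is the box `(i, j)` (row `i` of column `C_j`). -/
def LineB (c : List ℕ) (a i j : ℕ) (lab : Lab) : Prop :=
  2 ≤ j ∧ j ≤ c.length ∧ 1 ≤ i ∧
    (match lab with
     | Lab.one =>
         (maxHgt c j < hgt c j ∧ i ≤ maxHgt c j + 1 ∧ TinfCol c (j - 1) i = some a)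
       ∨ (hgt c j ≤ maxHgt c j ∧ i + 1 ≤ hgt c j ∧ TinfCol c (j - 1) i = some a)
       ∨ (hgt c j ≤ maxHgt c j ∧ i = hgt c j ∧
           ¬(∃ j', 1 ≤ j' ∧ j' < j ∧ hgt c j' = hgt c j) ∧
           TinfCol c (j - 1) i = some a)
       ∨ (hgt c j ≤ maxHgt c j ∧ i = hgt c j ∧
           (∃ j', 1 ≤ j' ∧ j' < j ∧ hgt c j' = hgt c j) ∧
           TinfCol c (j - 1) (i + 1) = some a)
     | Lab.star =>
         hgt c j ≤ maxHgt c j ∧ i = hgt c j ∧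
           (∃ j', 1 ≤ j' ∧ j' < j ∧ hgt c j' = hgt c j) ∧
           TinfCol c (j - 1) i = some a)

/-- `LineE c a b lab` : `ℓ(D)` contains a line labelled `lab` joining the box of `D`
carrying entry `a` in `T` (on the left) to the box carrying entry `b` (on the right). -/
def LineE (c : List ℕ) (a b : ℕ) (lab : Lab) : Prop :=
  ∃ i j, LineB c a i j lab ∧ b = Tentry c i j

/-- the box `(i, j)` of `D` is right extremal relative to `ℓ(D)`. -/
def RExt (c : List ℕ) (i j : ℕ) : Prop :=
  IsBox c i j ∧ ∀ i' j', ¬ LineB c (Tentry c i j) i' j' Lab.one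

/-- `c` is a composition of `n`. -/
def IsComposition (c : List ℕ) (n : ℕ) : Prop :=
  c.sum = n ∧ ∀ x ∈ c, 0 < x

/-- the set `s_S(t)` of steps of the profile staircase `s(t)`: whenever the entry `t`
descends one row on entering column `j` (a column of height `u` with `t` in row `u`
of column `j - 1` of `T(∞)` and in row `u + 1` of column `j`), the `T`-entry of the
box `R_u ∩ C_j` directly above is a step of `s(t)`. -/
def StepsOf (c : List ℕ) (t : ℕ) : Set ℕ :=
  {s | ∃ j, 2 ≤ j ∧ j ≤ c.length ∧
      TinfCol c (j - 1) (hgt c j) = some t ∧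
      TinfCol c j (hgt c j + 1) = some t ∧
      s = Tentry c (hgt c j) j}

/-!
A `∗`-line ends at the bottom box `R_u ∩ C_j` of a column whose height `u` already occurred
to its left, and it starts at the entry `ρ_u` in row `u` of column `j - 1` of `T(∞)`. Such a
column has a left neighbour, so the propagation rule drops `ρ_u` into row `u + 1` of `C_j`:
that is precisely a step of `s(ρ_u)` with value `T(R_u ∩ C_j)`. Conversely, row `u + 1` of `C_j`
can only be filled from row `u` (by a descent, which needs a left neighbour) or from row
`u + 1` of `C_{j-1}`; the latter is impossible since the entries of a column of `T(∞)` are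
distinct, because each column only receives copies of distinct entries of its predecessor and
fresh `T`-entries larger than all of them. Finally the bottom box of `C_j` carries
`c_1 + ⋯ + c_j`, which determines `j`, so at most one `∗`-line ends at a given box.
-/

section PrefixSums

variable {c : List ℕ}

lemma hgt_le_sum (c : List ℕ) (j : ℕ) : hgt c j ≤ c.sum := by
  unfold hgt
  rcases lt_or_ge (j - 1) c.length with h | h
  · rw [List.getD_eq_getElem _ _ h]
    exact List.single_le_sum (fun x _ => Nat.zero_le x) _ (List.getElem_mem h)
  · rw [List.getD_eq_default _ _ h]
    exact Nat.zero_le _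

lemma one_le_hgt (hpos : ∀ x ∈ c, 0 < x) {j : ℕ} (h1 : 1 ≤ j) (h2 : j ≤ c.length) :
    1 ≤ hgt c j := by
  unfold hgt
  rw [List.getD_eq_getElem _ _ (by omega)]
  exact hpos _ (List.getElem_mem _)

lemma sum_take_succ_getD (c : List ℕ) (k : ℕ) :
    (c.take (k + 1)).sum = (c.take k).sum + c.getD k 0 := by
  rcases lt_or_ge k c.length with h | h
  · rw [List.sum_take_succ _ _ h, List.getD_eq_getElem _ _ h]
  · rw [List.take_of_length_le h, List.take_of_length_le (by omega),
      List.getD_eq_default _ _ h, add_zero]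

lemma off_add_hgt {j : ℕ} (hj : 1 ≤ j) : off c j + hgt c j = (c.take j).sum := by
  obtain ⟨k, rfl⟩ : ∃ k, j = k + 1 := ⟨j - 1, by omega⟩
  exact (sum_take_succ_getD c k).symm

lemma sum_take_lt_sum_take (hpos : ∀ x ∈ c, 0 < x) {j j' : ℕ} (h : j < j')
    (hj' : j' ≤ c.length) : (c.take j).sum < (c.take j').sum := by
  have hstep := List.sum_take_succ c j (by omega)
  have hmono : (c.take (j + 1)).sum ≤ (c.take j').sum := List.monotone_sum_take c (by omega)
  have := hpos _ (List.getElem_mem (show j < c.length by omega))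
  omega

lemma eq_of_sum_take_eq (hpos : ∀ x ∈ c, 0 < x) {j j' : ℕ} (hj : j ≤ c.length)
    (hj' : j' ≤ c.length) (h : (c.take j).sum = (c.take j').sum) : j = j' := by
  by_contra hne
  rcases Nat.lt_or_gt_of_ne hne with hlt | hlt
  · exact (sum_take_lt_sum_take hpos hlt hj').ne h
  · exact (sum_take_lt_sum_take hpos hlt hj).ne' h

lemma hgt_le_maxHgt {j' j : ℕ} (h1 : 1 ≤ j') (h2 : j' < j) (hlen : j' ≤ c.length) :
    hgt c j' ≤ maxHgt c j := by
  unfold hgt maxHgt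
  refine List.le_max_of_le' 0 ?_ le_rfl
  rw [List.getD_eq_getElem _ _ (by omega),
    ← List.getElem_take (j := j - 1) (h := by rw [List.length_take]; omega)]
  exact List.getElem_mem _

lemma hasLeftNb_iff {j : ℕ} :
    HasLeftNb c j ↔ ∃ j', 1 ≤ j' ∧ j' < j ∧ hgt c j' = hgt c j := by
  refine ⟨fun ⟨i, h1, h2, h3, _⟩ => ⟨i, h1, h2, h3⟩, fun ⟨j0, hj1, hj2, hj3⟩ => ?_⟩
  let P : ℕ → Prop := fun i => 1 ≤ i ∧ hgt c i = hgt c j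
  have hP : P (Nat.findGreatest P (j - 1)) := Nat.findGreatest_spec (m := j0) (by omega) ⟨hj1, hj3⟩
  refine ⟨Nat.findGreatest P (j - 1), hP.1, ?_, hP.2, fun i' hlt hlt' heq => ?_⟩
  · have := Nat.findGreatest_le (P := P) (j - 1)
    omega
  · exact Nat.findGreatest_is_greatest hlt (by omega) ⟨by omega, heq⟩

end PrefixSums

section Propagation

variable {c : List ℕ} {j : ℕ} {prev : ℕ → Option ℕ}

lemma propStep_eq_some {cur : ℕ → Option ℕ} {t u x : ℕ}
    (h : propStep c j prev cur t u = some x) :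
    cur u = some x ∨ prev t = some x ∧
      (u = t ∧ hgt c j ≠ t ∨ u = t + 1 ∧ hgt c j = t ∧ HasLeftNb c j) := by
  unfold propStep at h
  cases hp : prev t with
  | none => simp only [hp] at h; exact Or.inl h
  | some l =>
    simp only [hp] at h
    split_ifs at h with hh hcond hcur <;> try exact Or.inl h
    · rw [Function.update_apply] at h
      split_ifs at h with hu
      · exact Or.inr ⟨h, Or.inr ⟨hu, hh, hcond.1⟩⟩
      · exact Or.inl h
    · rw [Function.update_apply] at h
      split_ifs at h with hu
      · exact Or.inr ⟨h, Or.inl ⟨hu, hh⟩⟩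
      · exact Or.inl h

lemma propStep_of_eq_some {cur : ℕ → Option ℕ} {t u x : ℕ} (h : cur u = some x) :
    propStep c j prev cur t u = some x := by
  unfold propStep
  cases prev t with
  | none => exact h
  | some l =>
    simp only
    split_ifs with hh hcond hcur <;> try exact h
    · rw [Function.update_of_ne (by rintro rfl; simp [h] at hcond)]
      exact h
    · rw [Function.update_of_ne (by rintro rfl; simp [h] at hcur)]
      exact h

lemma propStep_descend {cur : ℕ → Option ℕ} {t l : ℕ} (hp : prev t = some l)
    (hh : hgt c j = t) (hl : HasLeftNb c j) (hc : cur (t + 1) = none) :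
    propStep c j prev cur t (t + 1) = some l := by
  unfold propStep
  rw [hp]
  simp only [hh, if_true, hl, hc, and_self, Function.update_self]

lemma foldl_propStep_eq_some (L : List ℕ) {cur : ℕ → Option ℕ} {u x : ℕ}
    (h : L.foldl (propStep c j prev) cur u = some x) :
    cur u = some x ∨ ∃ t ∈ L, prev t = some x ∧
      (u = t ∧ hgt c j ≠ t ∨ u = t + 1 ∧ hgt c j = t ∧ HasLeftNb c j) := by
  induction L generalizing cur with
  | nil => exact Or.inl h
  | cons a L ih =>
    rcases ih h with h' | ⟨t, ht, h'⟩
    · exact (propStep_eq_some h').imp_right fun h'' => ⟨a, List.mem_cons_self, h''⟩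
    · exact Or.inr ⟨t, List.mem_cons_of_mem a ht, h'⟩

lemma foldl_propStep_of_eq_some (L : List ℕ) {cur : ℕ → Option ℕ} {u x : ℕ}
    (h : cur u = some x) : L.foldl (propStep c j prev) cur u = some x := by
  induction L generalizing cur with
  | nil => exact h
  | cons a L ih => exact ih (propStep_of_eq_some h)

end Propagation

section ColumnEntries

variable {c : List ℕ}

def RowsInjective (f : ℕ → Option ℕ) : Prop :=
  ∀ u v x, f u = some x → f v = some x → u = v

lemma Tcol_eq_some {j i x : ℕ} :
    Tcol c j i = some x ↔ 1 ≤ i ∧ i ≤ hgt c j ∧ x = Tentry c i j := by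
  unfold Tcol
  split_ifs with h
  · simp [h, eq_comm]
  · simpa using fun h1 h2 _ => h ⟨h1, h2⟩

lemma Tcol_le {j i x : ℕ} (hj : 1 ≤ j) (h : Tcol c j i = some x) : x ≤ (c.take j).sum := by
  obtain ⟨-, hi, rfl⟩ := Tcol_eq_some.1 h
  rw [← off_add_hgt hj]
  exact Nat.add_le_add_left hi _

lemma Tcol_rowsInjective (j : ℕ) : RowsInjective (Tcol c j) := by
  intro u v x hu hv
  obtain ⟨-, -, rfl⟩ := Tcol_eq_some.1 hu
  obtain ⟨-, -, h⟩ := Tcol_eq_some.1 hv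
  unfold Tentry at h
  omega

variable {j : ℕ} {prev : ℕ → Option ℕ}

lemma foldl_propStep_le (hj : 1 ≤ j) (hprev : ∀ i x, prev i = some x → x ≤ off c j)
    (L : List ℕ) {u x : ℕ} (h : L.foldl (propStep c j prev) (Tcol c j) u = some x) :
    x ≤ (c.take j).sum := by
  rcases foldl_propStep_eq_some L h with h' | ⟨t, -, h', -⟩
  · exact Tcol_le hj h'
  · exact (hprev t x h').trans ((off_add_hgt hj).symm ▸ Nat.le_add_right _ _)

lemma foldl_propStep_rowsInjective (hprev : ∀ i x, prev i = some x → x ≤ off c j)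
    (hinj : RowsInjective prev) (L : List ℕ) :
    RowsInjective (L.foldl (propStep c j prev) (Tcol c j)) := by
  -- fresh `T`-entries of column `j` exceed `off c j`, so they are never copies
  have fresh : ∀ {u a x}, Tcol c j u = some x → prev a = some x → False := by
    intro u a x hu ha
    obtain ⟨hu1, -, rfl⟩ := Tcol_eq_some.1 hu
    have := hprev a _ ha
    unfold Tentry at this
    omega
  intro u v x hu hv
  rcases foldl_propStep_eq_some L hu with hu' | ⟨a, -, ha, hau⟩ <;>
    rcases foldl_propStep_eq_some L hv with hv' | ⟨b, -, hb, hbv⟩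
  · exact Tcol_rowsInjective j u v x hu' hv'
  · exact (fresh hu' hb).elim
  · exact (fresh hv' ha).elim
  · obtain rfl := hinj a b x ha hb
    omega

lemma TinfCol_eq_foldl (hj : 2 ≤ j) :
    TinfCol c j = (List.range (c.sum + 2)).foldl
      (propStep c j (TinfCol c (j - 1))) (Tcol c j) := by
  obtain ⟨k, rfl⟩ : ∃ k, j = k + 2 := ⟨j - 2, by omega⟩
  rfl

lemma TinfCol_le_and_rowsInjective (c : List ℕ) :
    ∀ j, (∀ i x, TinfCol c j i = some x → x ≤ (c.take j).sum) ∧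
      RowsInjective (TinfCol c j)
  | 0 => ⟨fun _ _ h => by simp [TinfCol] at h, fun _ _ _ h => by simp [TinfCol] at h⟩
  | 1 => ⟨fun _ _ => Tcol_le le_rfl, Tcol_rowsInjective 1⟩
  | k + 2 => by
    obtain ⟨hle, hinj⟩ := TinfCol_le_and_rowsInjective c (k + 1)
    exact ⟨fun _ _ => foldl_propStep_le (by omega) hle _,
      foldl_propStep_rowsInjective hle hinj _⟩

lemma TinfCol_rowsInjective (c : List ℕ) (j : ℕ) : RowsInjective (TinfCol c j) :=
  (TinfCol_le_and_rowsInjective c j).2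

end ColumnEntries

section StarLines

variable {c : List ℕ} {j t : ℕ}

lemma TinfCol_hgt_add_one_of_hasLeftNb (hj : 2 ≤ j)
    (hprev : TinfCol c (j - 1) (hgt c j) = some t) (hl : HasLeftNb c j) :
    TinfCol c j (hgt c j + 1) = some t := by
  set h := hgt c j with hh
  have hN : c.sum + 2 = (h + 1) + (c.sum + 1 - h) := by have := hgt_le_sum c j; omega
  rw [TinfCol_eq_foldl hj, hN, List.range_add, List.range_succ, List.foldl_append,
    List.foldl_append]
  refine foldl_propStep_of_eq_some _ (propStep_descend hprev hh.symm hl ?_)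
  -- before step `h` of the fold only `T`-boxes and rows `< h` have been filled
  cases hmid : (List.range h).foldl (propStep c j (TinfCol c (j - 1))) (Tcol c j) (h + 1) with
  | none => rfl
  | some x =>
    rcases foldl_propStep_eq_some _ hmid with h' | ⟨a, ha, -, hau⟩
    · have := (Tcol_eq_some.1 h').2.1
      omega
    · have := List.mem_range.1 ha
      omega

lemma hasLeftNb_of_TinfCol_hgt_add_one (hj : 2 ≤ j)
    (hprev : TinfCol c (j - 1) (hgt c j) = some t)
    (hstep : TinfCol c j (hgt c j + 1) = some t) : HasLeftNb c j := by
  rw [TinfCol_eq_foldl hj] at hstep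
  rcases foldl_propStep_eq_some _ hstep with h' | ⟨a, -, ha, ⟨rfl, -⟩ | ⟨-, -, hl⟩⟩
  · have := (Tcol_eq_some.1 h').2.1
    omega
  · have := TinfCol_rowsInjective c (j - 1) _ _ _ ha hprev
    omega
  · exact hl

lemma lineE_star_iff (hpos : ∀ x ∈ c, 0 < x) (t s : ℕ) :
    LineE c t s Lab.star ↔ s ∈ StepsOf c t := by
  constructor
  · rintro ⟨i, j, ⟨hj2, hjlen, -, -, rfl, hex, hprev⟩, rfl⟩
    exact ⟨j, hj2, hjlen, hprev,
      TinfCol_hgt_add_one_of_hasLeftNb hj2 hprev (hasLeftNb_iff.2 hex), rfl⟩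
  · rintro ⟨j, hj2, hjlen, hprev, hstep, rfl⟩
    have hex := hasLeftNb_iff.1 (hasLeftNb_of_TinfCol_hgt_add_one hj2 hprev hstep)
    have hmax : hgt c j ≤ maxHgt c j :=
      let ⟨_, h1, h2, h3⟩ := hex
      h3 ▸ hgt_le_maxHgt h1 h2 (by omega)
    exact ⟨hgt c j, j, ⟨hj2, hjlen, one_le_hgt hpos (by omega) hjlen, hmax, rfl, hex, hprev⟩, rfl⟩

lemma lineE_star_unique (hpos : ∀ x ∈ c, 0 < x) {t t' s : ℕ}
    (h : LineE c t s Lab.star) (h' : LineE c t' s Lab.star) : t = t' := by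
  obtain ⟨-, j, ⟨hj2, hjlen, -, -, rfl, -, hprev⟩, rfl⟩ := h
  obtain ⟨-, j', ⟨hj2', hjlen', -, -, rfl, -, hprev'⟩, hs⟩ := h'
  rw [Tentry, Tentry, off_add_hgt (by omega), off_add_hgt (by omega)] at hs
  obtain rfl := eq_of_sum_take_eq hpos hjlen hjlen' hs
  exact Option.some_inj.1 (hprev.symm.trans hprev')

end StarLines

theorem statement4_general (n : ℕ) (c : List ℕ) (hc : IsComposition c n) :
    (∀ t, 1 ≤ t → t ≤ n → ∀ s, LineE c t s Lab.star ↔ s ∈ StepsOf c t) ∧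
    (∀ s, 1 ≤ s → s ≤ n →
      (∀ t t', LineE c t s Lab.star → LineE c t' s Lab.star → t = t') ∧
      (∀ t, 1 ≤ t → t ≤ n → (LineE c t s Lab.star ↔ s ∈ StepsOf c t))) :=
  ⟨fun t _ _ s => lineE_star_iff hc.2 t s,
    fun s _ _ => ⟨fun _ _ => lineE_star_unique hc.2, fun t _ _ => lineE_star_iff hc.2 t s⟩⟩

/-- (i) for each `t ∈ [1,n]`, the right-going lines of `ℓ(D)` labelled
`∗` issuing from `b(t)` are exactly the lines joining `b(t)` to `b(s)` for
`s ∈ s_S(t)`; (ii) for each `s ∈ [1,n]` there is at most one left-going line of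
`ℓ(D)` labelled `∗` ending at `b(s)`; it exists precisely when `s ∈ s_S(t)` for
some `t`, and in that case it joins `b(t)` to `b(s)`. -/
theorem statement4 (n : ℕ) (hn : 0 < n) (c : List ℕ) (hc : IsComposition c n) :
    (∀ t, 1 ≤ t → t ≤ n → ∀ s, LineE c t s Lab.star ↔ s ∈ StepsOf c t) ∧
    (∀ s, 1 ≤ s → s ≤ n →
      (∀ t t', LineE c t s Lab.star → LineE c t' s Lab.star → t = t') ∧
      (∀ t, 1 ≤ t → t ≤ n → (LineE c t s Lab.star ↔ s ∈ StepsOf c t))) :=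
  statement4_general n c hc
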